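/- Let C be a small category equipped with a Grothendieck topology J, let F : Cᵒᵖ ⥤ Type be a presheaf, and let p : CostructuredArrow yoneda F ⥤ C be the projection from the slice category. Then there exists a Grothendieck topology K on CostructuredArrow yoneda F such that for every object U and every sieve T on U, T is K-covering if and only if T = Sieve.functorPullback p S for some J-covering sieve S on p(U). -/

import Mathlib

/-!
A sieve `R` on `U` in `CostructuredArrow S T` is determined by its image `R.functorPushforward p`
under the projection `p : CostructuredArrow S T ⥤ C`: every `g : Z ⟶ U.left` lifts to
`CostructuredArrow.homMk' U g`, and a morphism `k` into `U` factors through `r ∈ R` as soon as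
`p k` factors through `p r`.
Sieves on `U` and on `U.left` therefore correspond bijectively, compatibly with pullbacks, and the
axioms of `J` transfer along this bijection.
-/

open CategoryTheory

universe u

namespace CategoryTheory

variable {C : Type*} [Category* C] {D : Type*} [Category* D] {S : C ⥤ D} {T : D}

namespace Sieve

lemma functorPullback_functorPushforward_costructuredArrowProj {U : CostructuredArrow S T}
    (R : Sieve U) :
    (R.functorPushforward (CostructuredArrow.proj S T)).functorPullback
      (CostructuredArrow.proj S T) = R := by
  refine le_antisymm ?_ (le_functorPushforward_pullback _ _)
  rintro V k ⟨W, r, (a : V.left ⟶ W.left), hr, hk : k.left = a ≫ r.left⟩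
  have hka : k = CostructuredArrow.homMk a (by
      rw [← CostructuredArrow.w k, ← CostructuredArrow.w r, hk, S.map_comp, Category.assoc]) ≫ r :=
    CostructuredArrow.hom_ext _ _ hk
  rw [hka]
  exact R.downward_closed hr _

lemma functorPushforward_functorPullback_costructuredArrowProj {U : CostructuredArrow S T}
    (R : Sieve U.left) :
    (R.functorPullback (CostructuredArrow.proj S T)).functorPushforward
      (CostructuredArrow.proj S T) = R :=
  le_antisymm (functorPullback_pushforward_le _ _) fun _ g hg ↦
    image_mem_functorPushforward _ _ (f := CostructuredArrow.homMk' U g) hg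

lemma functorPushforward_costructuredArrowProj_pullback {U V : CostructuredArrow S T}
    (f : V ⟶ U) (R : Sieve U) :
    (R.pullback f).functorPushforward (CostructuredArrow.proj S T) =
      (R.functorPushforward (CostructuredArrow.proj S T)).pullback f.left := by
  refine le_antisymm (functorPushforward_pullback_le _ _ _) fun Z g hg ↦ ?_
  have hgf : R (CostructuredArrow.homMk' V g ≫ f) := by
    rw [← functorPullback_functorPushforward_costructuredArrowProj R]
    exact hg
  exact image_mem_functorPushforward _ (R.pullback f) hgf

end Sieve

namespace GrothendieckTopology

variable (J : GrothendieckTopology C) (S T)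

def costructuredArrow : GrothendieckTopology (CostructuredArrow S T) where
  sieves U R := R.functorPushforward (CostructuredArrow.proj S T) ∈ J U.left
  top_mem' U := by
    change _ ∈ J U.left
    rw [Sieve.functorPushforward_top]
    exact J.top_mem _
  pullback_stable' U V R f hR := by
    change _ ∈ J V.left
    rw [Sieve.functorPushforward_costructuredArrowProj_pullback]
    exact J.pullback_stable _ hR
  transitive' U R hR R' hR' := J.transitive hR _ fun Z g hg ↦ by
    have hgR : R (CostructuredArrow.homMk' U g) := by
      rw [← Sieve.functorPullback_functorPushforward_costructuredArrowProj R]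
      exact hg
    have hcov : (R'.pullback (CostructuredArrow.homMk' U g)).functorPushforward
        (CostructuredArrow.proj S T) ∈ J Z := hR' hgR
    rwa [Sieve.functorPushforward_costructuredArrowProj_pullback] at hcov

variable {S T}

lemma mem_costructuredArrow_iff {U : CostructuredArrow S T} (R : Sieve U) :
    R ∈ J.costructuredArrow S T U ↔
      ∃ R₀ ∈ J U.left, R = R₀.functorPullback (CostructuredArrow.proj S T) := by
  constructor
  · intro hR
    exact ⟨_, hR, (Sieve.functorPullback_functorPushforward_costructuredArrowProj R).symm⟩
  · rintro ⟨R₀, hR₀, rfl⟩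
    change _ ∈ J U.left
    rwa [Sieve.functorPushforward_functorPullback_costructuredArrowProj]

end GrothendieckTopology

end CategoryTheory

theorem statement3 {C : Type u} [SmallCategory C] (J : GrothendieckTopology C)
    (F : Cᵒᵖ ⥤ Type u) :
    ∃ K : GrothendieckTopology (CostructuredArrow yoneda F),
      ∀ (U : CostructuredArrow yoneda F) (T : Sieve U),
        T ∈ K U ↔
          ∃ S ∈ J ((CostructuredArrow.proj yoneda F).obj U),
            T = S.functorPullback (CostructuredArrow.proj yoneda F) :=
  ⟨J.costructuredArrow yoneda F, fun _ ↦ J.mem_costructuredArrow_iff⟩
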